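/- arXiv:2004.06516 — 4 statements merged into one kernel-verified Lean document; each statement's English description precedes it below -/
import Mathlib

section
/- The singular values of the m × m lower bidiagonal matrix T with 1's on the diagonal and -1's on the subdiagonal are exactly 2 cos(kπ/(2m+1)) for k = 1, 2, ..., m. -/
/-!
For `sin ((2m+1)θ) = 0` the vector `v_j = (-1)^j sin ((2j+1)θ)` is an eigenvector of `T Tᵀ` with
eigenvalue `(2 cos θ)^2`: `T Tᵀ` acts as the negative second difference with boundary conditions
`v_{-1} = v_0` and `v_m = 0`, and the addition formula for `sin` turns the second difference of
`v` into a multiple of `v`. The angles `θ_k = (k+1)π/(2m+1)`, `k < m`, lie in `(0, π/2)`, so they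
give `m` distinct eigenvalues, i.e. the whole spectrum of the `m × m` matrix `T Tᵀ`; the singular
values are their nonnegative square roots `2 cos θ_k`.
-/

open Real Matrix Finset

namespace Matrix

theorem mem_spectrum_of_mulVec_eq_smul {K n : Type*} [Field K] [Fintype n] [DecidableEq n]
    {A : Matrix n n K} {μ : K} {v : n → K} (hv : v ≠ 0) (h : A *ᵥ v = μ • v) :
    μ ∈ spectrum K A := by
  rw [← spectrum_toLin']
  exact (Module.End.hasEigenvalue_of_hasEigenvector
    ⟨Module.End.mem_eigenspace_iff.mpr (by simpa using h), hv⟩).mem_spectrum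

theorem spectrum_eq_range_of_injective {K n ι : Type*} [Field K] [Fintype n]
    [DecidableEq n] [Fintype ι] {A : Matrix n n K} {f : ι → K} (hf : Function.Injective f)
    (hcard : Fintype.card n ≤ Fintype.card ι) (hmem : ∀ i, f i ∈ spectrum K A) :
    spectrum K A = Set.range f := by
  classical
  refine subset_antisymm (fun μ hμ => ?_) (Set.range_subset_iff.mpr hmem)
  by_contra hμf
  have hroots : (insert μ (univ.image f)).val ⊆ A.charpoly.roots := by
    intro x hx
    rw [Polynomial.mem_roots A.charpoly_monic.ne_zero, ← mem_spectrum_iff_isRoot_charpoly]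
    obtain rfl | ⟨i, -, rfl⟩ := mem_insert.mp hx |>.imp_right mem_image.mp
    exacts [hμ, hmem i]
  have := Polynomial.card_le_degree_of_subset_roots hroots
  rw [card_insert_of_notMem (by simpa using hμf), card_image_of_injective _ hf, card_univ,
    charpoly_natDegree_eq_dim] at this
  omega

end Matrix

theorem setOf_sq_mem_range_sq {α ι : Type*} [Semiring α] [LinearOrder α]
    [IsStrictOrderedRing α] {f : ι → α} (hf : ∀ i, 0 ≤ f i) :
    {s : α | 0 ≤ s ∧ s ^ 2 ∈ Set.range (fun i => f i ^ 2)} = Set.range f := by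
  ext s
  constructor
  · rintro ⟨hs, i, hi⟩
    exact ⟨i, (sq_eq_sq₀ (hf i) hs).mp hi⟩
  · rintro ⟨i, rfl⟩
    exact ⟨hf i, i, rfl⟩

def lowerBidiag (R : Type*) [Ring R] (m : ℕ) : Matrix (Fin m) (Fin m) R := fun i j =>
  if i = j then 1 else if (i : ℕ) = (j : ℕ) + 1 then -1 else 0

section lowerBidiag

variable {R : Type*} [Ring R] {m : ℕ}

theorem lowerBidiag_mul_apply (i j : Fin m) (x : R) :
    lowerBidiag R m i j * x = (if i = j then x else 0) - if (i : ℕ) = j + 1 then x else 0 := by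
  unfold lowerBidiag
  split_ifs <;> simp_all

theorem lowerBidiag_transpose_mulVec (f : ℕ → R) (hf : f m = 0) (i : Fin m) :
    ((lowerBidiag R m)ᵀ *ᵥ fun j => f j) i = f i - f (i + 1) := by
  simp only [mulVec, dotProduct, transpose_apply, lowerBidiag_mul_apply, sum_sub_distrib,
    sum_ite_eq', mem_univ, if_true]
  rw [Fin.sum_univ_eq_sum_range (fun j => if (j : ℕ) = i + 1 then f j else 0), sum_ite_eq']
  rcases (show (i : ℕ) + 1 ≤ m from i.isLt).lt_or_eq with h | h
  · rw [if_pos (mem_range.mpr h)]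
  · rw [if_neg (by simp [h]), h, hf]

theorem lowerBidiag_mulVec (f : ℕ → R) (i : Fin m) :
    (lowerBidiag R m *ᵥ fun j => f j) i = f i - if (i : ℕ) = 0 then 0 else f (i - 1) := by
  simp only [mulVec, dotProduct, lowerBidiag_mul_apply, sum_sub_distrib, sum_ite_eq,
    mem_univ, if_true]
  rw [Fin.sum_univ_eq_sum_range (fun j => if (i : ℕ) = j + 1 then f j else 0)]
  obtain ⟨_ | n, hi⟩ := i
  · simp
  · simp [(Nat.lt_succ_self n).trans hi]

end lowerBidiag

noncomputable def altSinSeq (θ : ℝ) (n : ℕ) : ℝ := (-1) ^ n * sin ((2 * n + 1) * θ)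

theorem altSinSeq_zero (θ : ℝ) : altSinSeq θ 0 = sin θ := by
  simp [altSinSeq]

theorem altSinSeq_sub_altSinSeq_one (θ : ℝ) :
    altSinSeq θ 0 - altSinSeq θ 1 = (2 * cos θ) ^ 2 * altSinSeq θ 0 := by
  simp only [altSinSeq, Nat.cast_zero, Nat.cast_one, mul_zero, zero_add, one_mul, pow_zero,
    pow_one]
  rw [show (2 * 1 + 1) * θ = 2 * θ + θ by ring, sin_add, sin_two_mul, cos_two_mul]
  ring

theorem altSinSeq_second_diff (θ : ℝ) (n : ℕ) :
    2 * altSinSeq θ (n + 1) - altSinSeq θ n - altSinSeq θ (n + 2) =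
      (2 * cos θ) ^ 2 * altSinSeq θ (n + 1) := by
  have hprev : (2 * (n : ℝ) + 1) * θ = (2 * ((n + 1 : ℕ) : ℝ) + 1) * θ - 2 * θ := by
    push_cast; ring
  have hnext :
      (2 * ((n + 2 : ℕ) : ℝ) + 1) * θ = (2 * ((n + 1 : ℕ) : ℝ) + 1) * θ + 2 * θ := by
    push_cast; ring
  simp only [altSinSeq, hprev, hnext, sin_add, sin_sub, cos_two_mul, pow_succ]
  ring

theorem lowerBidiag_mul_transpose_mulVec_altSinSeq {m : ℕ} {θ : ℝ}
    (hθ : sin ((2 * m + 1) * θ) = 0) :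
    (lowerBidiag ℝ m * (lowerBidiag ℝ m)ᵀ) *ᵥ (fun j : Fin m => altSinSeq θ j) =
      (2 * cos θ) ^ 2 • fun j : Fin m => altSinSeq θ j := by
  have hfirst : (lowerBidiag ℝ m)ᵀ *ᵥ (fun j : Fin m => altSinSeq θ j) =
      fun j : Fin m => altSinSeq θ j - altSinSeq θ (j + 1) :=
    funext <| lowerBidiag_transpose_mulVec _ (by simp [altSinSeq, hθ])
  ext ⟨i, hi⟩
  rw [← mulVec_mulVec, hfirst,
    lowerBidiag_mulVec (fun j => altSinSeq θ j - altSinSeq θ (j + 1))]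
  cases i with
  | zero => simpa using altSinSeq_sub_altSinSeq_one θ
  | succ n =>
    simp only [Nat.add_one_ne_zero, if_false, Nat.add_sub_cancel, Pi.smul_apply, smul_eq_mul]
    linear_combination altSinSeq_second_diff θ n

noncomputable def bidiagAngle (m : ℕ) (k : Fin m) : ℝ :=
  ((k : ℕ) + 1 : ℝ) * π / (2 * m + 1)

section bidiagAngle

variable {m : ℕ} (k : Fin m)

theorem bidiagAngle_pos : 0 < bidiagAngle m k := by
  unfold bidiagAngle; positivity

theorem bidiagAngle_lt_pi_div_two : bidiagAngle m k < π / 2 := by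
  have hk : ((k : ℕ) : ℝ) + 1 ≤ m := by exact_mod_cast k.isLt
  rw [bidiagAngle, div_lt_div_iff₀ (by positivity) two_pos]
  nlinarith [pi_pos]

theorem sin_mul_bidiagAngle : sin ((2 * m + 1) * bidiagAngle m k) = 0 := by
  rw [bidiagAngle, mul_div_cancel₀ _ (by positivity)]
  exact_mod_cast sin_nat_mul_pi ((k : ℕ) + 1)

theorem two_mul_cos_bidiagAngle_pos : 0 < 2 * cos (bidiagAngle m k) :=
  mul_pos two_pos <| cos_pos_of_mem_Ioo
    ⟨by linarith [bidiagAngle_pos k, pi_pos], bidiagAngle_lt_pi_div_two k⟩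

end bidiagAngle

theorem bidiagAngle_injective (m : ℕ) : Function.Injective (bidiagAngle m) := by
  intro k l h
  rw [bidiagAngle, bidiagAngle, div_left_inj' (by positivity),
    mul_left_inj' pi_ne_zero, add_left_inj, Nat.cast_inj] at h
  exact Fin.ext h

theorem sq_two_mul_cos_bidiagAngle_injective (m : ℕ) :
    Function.Injective fun k => (2 * cos (bidiagAngle m k)) ^ 2 := by
  have hmem : ∀ k, bidiagAngle m k ∈ Set.Icc 0 π := fun k =>
    ⟨(bidiagAngle_pos k).le, by linarith [bidiagAngle_lt_pi_div_two k, pi_pos]⟩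
  intro k l h
  rw [sq_eq_sq₀ (two_mul_cos_bidiagAngle_pos k).le (two_mul_cos_bidiagAngle_pos l).le,
    mul_right_inj' two_ne_zero] at h
  exact bidiagAngle_injective m (injOn_cos (hmem k) (hmem l) h)

theorem sq_two_mul_cos_bidiagAngle_mem_spectrum {m : ℕ} (k : Fin m) :
    (2 * cos (bidiagAngle m k)) ^ 2 ∈
      spectrum ℝ (lowerBidiag ℝ m * (lowerBidiag ℝ m)ᵀ) := by
  refine mem_spectrum_of_mulVec_eq_smul (v := fun j : Fin m => altSinSeq (bidiagAngle m k) j) ?_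
    (lowerBidiag_mul_transpose_mulVec_altSinSeq (sin_mul_bidiagAngle k))
  intro hv
  have h0 := congrFun hv ⟨0, k.pos⟩
  simp only [altSinSeq_zero, Pi.zero_apply] at h0
  exact (sin_pos_of_pos_of_lt_pi (bidiagAngle_pos k)
    (by linarith [bidiagAngle_lt_pi_div_two k, pi_pos])).ne' h0

theorem spectrum_lowerBidiag_mul_transpose (m : ℕ) :
    spectrum ℝ (lowerBidiag ℝ m * (lowerBidiag ℝ m)ᵀ) =
      Set.range fun k => (2 * cos (bidiagAngle m k)) ^ 2 :=
  spectrum_eq_range_of_injective (sq_two_mul_cos_bidiagAngle_injective m) le_rfl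
    sq_two_mul_cos_bidiagAngle_mem_spectrum

theorem bidiagonal_singular_values (m : ℕ) :
    let T : Matrix (Fin m) (Fin m) ℝ := fun i j =>
      if i = j then 1 else if (i : ℕ) = (j : ℕ) + 1 then -1 else 0
    {s : ℝ | 0 ≤ s ∧ s ^ 2 ∈ spectrum ℝ (T * T.transpose)} =
      Set.range (fun k : Fin m =>
        2 * Real.cos (((k : ℕ) + 1 : ℝ) * π / (2 * m + 1))) := by
  intro T
  rw [show T = lowerBidiag ℝ m from rfl, spectrum_lowerBidiag_mul_transpose]
  exact setOf_sq_mem_range_sq fun k => (two_mul_cos_bidiagAngle_pos k).le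
end

section
/- For the simple symmetric random walk on ℤ_n (each step moves ±1 mod n with probability 1/2 each), the probability of returning to the starting point after 2τ steps satisfies max{1/n, C(2τ, τ)/4^τ} ≤ p ≤ 4/n + 1/√(πτ), and in particular C(2τ,τ)/4^τ ≥ 1/(2√τ). -/
/-!
Write `L = ½ (T + T⁻¹)` with `T` the translation by `1` on `ℤ/n`. Expanding `(T + T⁻¹)^(2τ)`
binomially, `4^τ p` is the sum of the `C(2τ, j)` over the `j` with `2 (j - τ) ≡ 0 mod n`, that is
over `j ≡ τ` modulo `m`, the additive order of `2`, which is at least `n / 2`. The term `j = τ` is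
the lower bound `C(2τ, τ) / 4^τ`. The binomial coefficients decrease away from the centre, so every
other term is at most the mean of the `m` coefficients between it and the centre; these terms
therefore add up to at most `1 / m ≤ 2 / n`. The lower bound `1 / n` is Cauchy–Schwarz, since by
symmetry `p = ∑ y, (L^τ) 0 y ^ 2` and the rows of `L^τ` sum to `1`. Finally, Wallis' product gives
`π τ C(2τ, τ)² ≤ 16^τ`, and `16^τ ≤ 4 τ C(2τ, τ)²` follows by induction from
`(τ + 1) C(2τ + 2, τ + 1) = 2 (2τ + 1) C(2τ, τ)`.
-/

open Finset Matrix Real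

lemma sum_range_two_mul_add_one_of_symm {M : Type*} [AddCommMonoid M] (f : ℕ → M) (τ : ℕ)
    (hf : ∀ d < τ, f (τ - (d + 1)) = f (τ + (d + 1))) :
    ∑ j ∈ range (2 * τ + 1), f j = f τ + 2 • ∑ d ∈ range τ, f (τ + (d + 1)) := by
  rw [show 2 * τ + 1 = τ + 1 + τ by ring, sum_range_add, sum_range_succ, ← sum_range_reflect,
    two_nsmul]
  have hleft : ∑ d ∈ range τ, f (τ - 1 - d) = ∑ d ∈ range τ, f (τ + (d + 1)) :=
    sum_congr rfl fun d hd => by rw [← hf d (mem_range.1 hd)]; congr 1; omega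
  rw [hleft]
  simp only [add_assoc, add_comm 1]
  abel

lemma mul_sum_range_ite_dvd_le {f : ℕ → ℝ} (hf : Antitone f) (hf0 : 0 ≤ f) {m : ℕ} (hm : 0 < m)
    (N : ℕ) : m * ∑ d ∈ range N, (if m ∣ d + 1 then f d else 0) ≤ ∑ d ∈ range N, f d := by
  induction N using Nat.strong_induction_on generalizing f with
  | _ N ih =>
  rcases lt_or_ge N m with hN | hN
  · have hzero : ∀ d ∈ range N, ¬ m ∣ d + 1 := fun d hd hdvd =>
      (Nat.le_of_dvd d.succ_pos hdvd).not_gt (by rw [mem_range] at hd; omega)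
    rw [sum_congr rfl fun d hd => if_neg (hzero d hd), sum_const_zero, mul_zero]
    exact sum_nonneg fun d _ => hf0 d
  -- Peel off the block `range m`: its only index with `m ∣ d + 1` is `m - 1`, where `f` is least.
  obtain ⟨N, rfl⟩ := Nat.exists_eq_add_of_le hN
  have hfirst : ∑ d ∈ range m, (if m ∣ d + 1 then f d else 0) = f (m - 1) := by
    obtain ⟨k, rfl⟩ := Nat.exists_eq_add_of_lt hm
    rw [sum_range_succ, sum_eq_zero fun d hd => if_neg ?_, if_pos (by simp), zero_add]
    · simp
    · exact fun hdvd => (Nat.le_of_dvd d.succ_pos hdvd).not_gt (by rw [mem_range] at hd; omega)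
  have hblock : (m : ℝ) * f (m - 1) ≤ ∑ d ∈ range m, f d := by
    simpa using card_nsmul_le_sum (range m) f (f (m - 1)) fun d hd => hf (by simp at hd; omega)
  have hrest := ih N (by omega) (f := fun d => f (m + d)) (fun a b hab => hf (by omega))
    (fun d => hf0 (m + d))
  rw [sum_range_add, sum_range_add, mul_add, hfirst]
  simp only [add_assoc, Nat.dvd_add_right (dvd_refl m)]
  exact add_le_add hblock hrest

namespace Nat

lemma choose_succ_le_choose {n k : ℕ} (h : n ≤ 2 * k + 1) : n.choose (k + 1) ≤ n.choose k := by
  have hrec := choose_succ_right_eq n k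
  have : n.choose (k + 1) * (k + 1) ≤ n.choose k * (k + 1) :=
    hrec ▸ Nat.mul_le_mul_left _ (by omega)
  exact Nat.le_of_mul_le_mul_right this k.succ_pos

lemma antitone_two_mul_choose_add (τ : ℕ) : Antitone fun d => (2 * τ).choose (τ + d) :=
  antitone_nat_of_succ_le fun d => by
    simpa only [← add_assoc] using choose_succ_le_choose (by omega)

lemma four_pow_eq_centralBinom_add_two_mul_sum_choose (τ : ℕ) :
    4 ^ τ = τ.centralBinom + 2 * ∑ d ∈ range τ, (2 * τ).choose (τ + (d + 1)) := by
  have hsplit := sum_range_two_mul_add_one_of_symm (2 * τ).choose τ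
    fun d hd => choose_symm_of_eq_add (by omega)
  rw [sum_range_choose, ← centralBinom_eq_two_mul_choose, pow_mul] at hsplit
  simpa using hsplit

lemma sixteen_pow_le_four_mul_mul_centralBinom_sq {k : ℕ} (hk : 0 < k) :
    16 ^ k ≤ 4 * k * k.centralBinom ^ 2 := by
  induction k, hk using Nat.le_induction with
  | base => simp [centralBinom, choose]
  | succ k hk ih =>
    have hrec := succ_mul_centralBinom_succ k
    refine Nat.le_of_mul_le_mul_right (?_ : 16 ^ (k + 1) * (k + 1) ≤ _ * (k + 1)) k.succ_pos
    have : 4 * (k + 1) * (k + 1).centralBinom ^ 2 * (k + 1) =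
        16 * (2 * k + 1) ^ 2 * k.centralBinom ^ 2 := by
      rw [show 4 * (k + 1) * (k + 1).centralBinom ^ 2 * (k + 1)
        = 4 * ((k + 1) * (k + 1).centralBinom) ^ 2 by ring, hrec]
      ring
    rw [this, pow_succ]
    nlinarith [Nat.zero_le (k.centralBinom ^ 2)]

end Nat

lemma add_nsmul_eq_tsub_nsmul_iff_addOrderOf_dvd {G : Type*} [AddCancelCommMonoid G] (g : G)
    {τ e : ℕ} (he : e ≤ τ) : (τ + e) • g = (τ - e) • g ↔ addOrderOf (2 • g) ∣ e := by
  rw [addOrderOf_dvd_iff_nsmul_eq_zero, show τ + e = τ - e + 2 * e by omega, add_nsmul,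
    add_eq_left, mul_nsmul]

lemma addOrderOf_le_two_mul_addOrderOf_two_nsmul {G : Type*} [AddMonoid G] (g : G) :
    addOrderOf g ≤ 2 * addOrderOf (2 • g) := by
  rw [addOrderOf_nsmul' g two_ne_zero]
  calc addOrderOf g = addOrderOf g / (addOrderOf g).gcd 2 * (addOrderOf g).gcd 2 :=
        (Nat.div_mul_cancel (Nat.gcd_dvd_left _ _)).symm
    _ ≤ addOrderOf g / (addOrderOf g).gcd 2 * 2 :=
        Nat.mul_le_mul_left _ (Nat.gcd_le_right _ two_pos)
    _ = _ := mul_comm _ _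

namespace Real

lemma Wallis.W_mul_mul_centralBinom_sq (k : ℕ) :
    Wallis.W k * (2 * k + 1) * k.centralBinom ^ 2 = 16 ^ k := by
  have hfact : (k.centralBinom : ℝ) * k.factorial * k.factorial = (2 * k).factorial := by
    have h := Nat.choose_mul_factorial_mul_factorial (by omega : k ≤ 2 * k)
    rw [show 2 * k - k = k by omega, ← Nat.centralBinom_eq_two_mul_choose] at h
    exact_mod_cast h
  have hC : (k.centralBinom : ℝ) ≠ 0 := by exact_mod_cast k.centralBinom_ne_zero
  rw [Wallis.W_eq_factorial_ratio, ← hfact,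
    show (16 : ℝ) ^ k = 2 ^ (4 * k) by rw [pow_mul]; norm_num]
  field_simp

lemma pi_mul_mul_centralBinom_sq_le (k : ℕ) : π * k * k.centralBinom ^ 2 ≤ 16 ^ k := by
  rw [← Wallis.W_mul_mul_centralBinom_sq]
  have hW := Wallis.le_W k
  rw [div_mul_eq_mul_div, div_le_iff₀ (by positivity)] at hW
  have hk : π * k ≤ Wallis.W k * (2 * k + 1) := by
    refine le_of_mul_le_mul_right ?_ (by positivity : (0 : ℝ) < 2 * k + 2)
    nlinarith [pi_pos]
  exact mul_le_mul_of_nonneg_right hk (by positivity)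

lemma centralBinom_div_four_pow_le_one_div_sqrt {k : ℕ} (hk : k ≠ 0) :
    (k.centralBinom : ℝ) / 4 ^ k ≤ 1 / √(π * k) := by
  have hpos : 0 < π * k := by positivity
  rw [← pow_le_pow_iff_left₀ (by positivity) (by positivity) two_ne_zero, div_pow, div_pow,
    one_pow, sq_sqrt hpos.le, ← pow_mul, mul_comm k, pow_mul, div_le_div_iff₀ (by positivity) hpos,
    one_mul, show (4 : ℝ) ^ 2 = 16 by norm_num]
  linarith [pi_mul_mul_centralBinom_sq_le k]

lemma one_div_two_mul_sqrt_le_centralBinom_div_four_pow {k : ℕ} (hk : 0 < k) :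
    1 / (2 * √k) ≤ (k.centralBinom : ℝ) / 4 ^ k := by
  rw [← pow_le_pow_iff_left₀ (by positivity) (by positivity) two_ne_zero, div_pow, div_pow,
    one_pow, mul_pow, sq_sqrt (by positivity), ← pow_mul, mul_comm k, pow_mul,
    div_le_div_iff₀ (by positivity) (by positivity), one_mul, mul_comm,
    show (4 : ℝ) ^ 2 = 16 by norm_num, show (2 : ℝ) ^ 2 = 4 by norm_num]
  exact_mod_cast Nat.sixteen_pow_le_four_mul_mul_centralBinom_sq hk

end Real

lemma inv_card_le_mul_self_apply_self {ι : Type*} [Fintype ι] {M : Matrix ι ι ℝ} (hM : M.IsSymm)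
    {i : ι} (hi : ∑ j, M i j = 1) : 1 / (Fintype.card ι : ℝ) ≤ (M * M) i i := by
  have hdiag : (M * M) i i = ∑ j, M i j ^ 2 := by
    simp only [Matrix.mul_apply, sq, hM.apply i]
  have hcs := sq_sum_le_card_mul_sum_sq (s := univ) (f := fun j => M i j)
  rw [hi, one_pow, card_univ] at hcs
  rw [hdiag, div_le_iff₀' (by exact_mod_cast Fintype.card_pos_iff.2 ⟨i⟩)]
  exact hcs

section Translation

variable (R : Type*) {G : Type*} [Semiring R] [AddCommGroup G] [DecidableEq G]

def translationMatrix (a : G) : Matrix G G R :=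
  of fun x y => if y = x + a then 1 else 0

@[simp]
lemma translationMatrix_apply (a x y : G) :
    translationMatrix R a x y = if y = x + a then 1 else 0 :=
  rfl

lemma translationMatrix_add [Fintype G] (a b : G) :
    translationMatrix R (a + b) = translationMatrix R a * translationMatrix R b := by
  ext x y
  simp only [translationMatrix_apply, mul_apply, ite_mul, one_mul, zero_mul, sum_ite_eq',
    mem_univ, if_true, add_assoc]

lemma translationMatrix_zero : translationMatrix R (0 : G) = 1 := by
  ext x y
  simp [one_apply, eq_comm]

lemma translationMatrix_nsmul [Fintype G] (k : ℕ) (a : G) :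
    translationMatrix R (k • a) = translationMatrix R a ^ k := by
  induction k with
  | zero => simp [translationMatrix_zero]
  | succ k ih => rw [succ_nsmul, pow_succ, translationMatrix_add, ih]

lemma transpose_translationMatrix (a : G) :
    (translationMatrix R a)ᵀ = translationMatrix R (-a) := by
  ext x y
  simp [eq_add_neg_iff_add_eq, eq_comm]

lemma translationMatrix_apply_self (a x : G) :
    translationMatrix R a x x = if a = 0 then 1 else 0 := by
  simp

lemma translationMatrix_mem_rowStochastic [Fintype G] [PartialOrder R] [IsOrderedRing R] (a : G) :
    translationMatrix R a ∈ rowStochastic R G := by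
  refine mem_rowStochastic_iff_sum.2 ⟨fun x y => ?_, fun x => by simp⟩
  simp only [translationMatrix_apply]
  split_ifs <;> simp

end Translation

section RandomWalk

variable {G : Type*} [AddCommGroup G] [DecidableEq G]

noncomputable def randomWalkMatrix (g : G) : Matrix G G ℝ :=
  (2⁻¹ : ℝ) • (translationMatrix ℝ g + translationMatrix ℝ (-g))

lemma randomWalkMatrix_isSymm (g : G) : (randomWalkMatrix g).IsSymm := by
  simp [randomWalkMatrix, IsSymm, transpose_translationMatrix, add_comm]

variable [Fintype G]

lemma randomWalkMatrix_mem_rowStochastic (g : G) : randomWalkMatrix g ∈ rowStochastic ℝ G := by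
  rw [randomWalkMatrix, smul_add]
  exact convex_rowStochastic (translationMatrix_mem_rowStochastic ℝ g)
    (translationMatrix_mem_rowStochastic ℝ (-g)) (by norm_num) (by norm_num) (by norm_num)

lemma randomWalkMatrix_pow_apply_self (g : G) (N : ℕ) (x : G) :
    (randomWalkMatrix g ^ N) x x =
      (∑ j ∈ range (N + 1), (N.choose j : ℝ) * if j • g = (N - j) • g then 1 else 0) / 2 ^ N := by
  have hcomm : Commute (translationMatrix ℝ g) (translationMatrix ℝ (-g)) := by
    rw [Commute, SemiconjBy, ← translationMatrix_add, ← translationMatrix_add, add_comm]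
  rw [randomWalkMatrix, smul_pow, hcomm.add_pow', Matrix.smul_apply, Matrix.sum_apply,
    Finset.Nat.sum_antidiagonal_eq_sum_range_succ_mk, smul_eq_mul, div_eq_inv_mul, inv_pow,
    Finset.mul_sum, Finset.mul_sum]
  refine sum_congr rfl fun j _ => ?_
  rw [Matrix.smul_apply, ← translationMatrix_nsmul, ← translationMatrix_nsmul,
    ← translationMatrix_add, translationMatrix_apply_self, smul_neg, ← sub_eq_add_neg, nsmul_eq_mul]
  simp only [sub_eq_zero]

lemma randomWalkMatrix_pow_two_mul_apply_self (g : G) (τ : ℕ) (x : G) :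
    (randomWalkMatrix g ^ (2 * τ)) x x = (τ.centralBinom + 2 * ∑ d ∈ range τ,
      (if addOrderOf (2 • g) ∣ d + 1 then ((2 * τ).choose (τ + (d + 1)) : ℝ) else 0)) / 4 ^ τ := by
  rw [randomWalkMatrix_pow_apply_self, sum_range_two_mul_add_one_of_symm, pow_mul,
    ← Nat.centralBinom_eq_two_mul_choose, show 2 * τ - τ = τ by omega, if_pos rfl, mul_one,
    nsmul_eq_mul]
  · rw [Nat.cast_ofNat, show (2 : ℝ) ^ 2 = 4 by norm_num]
    congr 3
    refine sum_congr rfl fun d hd => ?_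
    rw [show 2 * τ - (τ + (d + 1)) = τ - (d + 1) by omega, mul_ite, mul_one, mul_zero]
    exact if_congr
      (add_nsmul_eq_tsub_nsmul_iff_addOrderOf_dvd g (by rw [mem_range] at hd; omega)) rfl rfl
  · intro d hd
    rw [show 2 * τ - (τ + (d + 1)) = τ - (d + 1) by omega,
      show 2 * τ - (τ - (d + 1)) = τ + (d + 1) by omega,
      Nat.choose_symm_of_eq_add (show 2 * τ = τ - (d + 1) + (τ + (d + 1)) by omega)]
    exact congrArg _ (if_congr eq_comm rfl rfl)

lemma inv_card_le_randomWalkMatrix_pow_apply_self (g : G) (τ : ℕ) (x : G) :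
    1 / (Fintype.card G : ℝ) ≤ (randomWalkMatrix g ^ (2 * τ)) x x := by
  rw [two_mul, pow_add]
  exact inv_card_le_mul_self_apply_self ((randomWalkMatrix_isSymm g).pow τ)
    (sum_row_of_mem_rowStochastic (pow_mem (randomWalkMatrix_mem_rowStochastic g) τ) x)

lemma centralBinom_div_le_randomWalkMatrix_pow_apply_self (g : G) (τ : ℕ) (x : G) :
    (τ.centralBinom : ℝ) / 4 ^ τ ≤ (randomWalkMatrix g ^ (2 * τ)) x x := by
  rw [randomWalkMatrix_pow_two_mul_apply_self]
  gcongr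
  refine le_add_of_nonneg_right (mul_nonneg zero_le_two (sum_nonneg fun d _ => ?_))
  split_ifs <;> positivity

lemma randomWalkMatrix_pow_apply_self_le (g : G) (τ : ℕ) (x : G) :
    (randomWalkMatrix g ^ (2 * τ)) x x ≤ τ.centralBinom / 4 ^ τ + 1 / addOrderOf (2 • g) := by
  rw [randomWalkMatrix_pow_two_mul_apply_self, add_div]
  set m := addOrderOf (2 • g)
  have hm : 0 < m := addOrderOf_pos _
  set S := ∑ d ∈ range τ, (if m ∣ d + 1 then ((2 * τ).choose (τ + (d + 1)) : ℝ) else 0)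
  have hS : m * S ≤ ∑ d ∈ range τ, ((2 * τ).choose (τ + (d + 1)) : ℝ) :=
    mul_sum_range_ite_dvd_le
      (fun a b hab => by exact_mod_cast Nat.antitone_two_mul_choose_add τ (by omega))
      (fun d => by positivity) hm τ
  have htotal : (4 : ℝ) ^ τ =
      τ.centralBinom + 2 * ∑ d ∈ range τ, ((2 * τ).choose (τ + (d + 1)) : ℝ) := by
    exact_mod_cast Nat.four_pow_eq_centralBinom_add_two_mul_sum_choose τ
  have hcentral : (0 : ℝ) ≤ τ.centralBinom := by positivity
  rw [add_le_add_iff_left, div_le_div_iff₀ (by positivity) (by exact_mod_cast hm)]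
  linarith

end RandomWalk

theorem return_probability_cycle (n τ : ℕ) [NeZero n] (hτ : 1 ≤ τ) :
    let L : Matrix (ZMod n) (ZMod n) ℝ := fun x y =>
      (if y = x + 1 then 1 / 2 else 0) + (if y = x - 1 then 1 / 2 else 0)
    let p : ℝ := (L ^ (2 * τ)) 0 0
    max (1 / (n : ℝ)) ((Nat.choose (2 * τ) τ : ℝ) / 4 ^ τ) ≤ p ∧
      p ≤ 4 / (n : ℝ) + 1 / Real.sqrt (π * τ) ∧
      1 / (2 * Real.sqrt τ) ≤ (Nat.choose (2 * τ) τ : ℝ) / 4 ^ τ := by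
  intro L p
  have hL : L = randomWalkMatrix (1 : ZMod n) := by
    ext x y
    simp only [L, randomWalkMatrix, Matrix.smul_apply, Matrix.add_apply, translationMatrix_apply,
      sub_eq_add_neg]
    split_ifs <;> norm_num
  have hp : p = (randomWalkMatrix (1 : ZMod n) ^ (2 * τ)) 0 0 := by rw [← hL]
  have hm : (n : ℝ) ≤ 2 * addOrderOf (2 • (1 : ZMod n)) := by
    exact_mod_cast ZMod.addOrderOf_one n ▸ addOrderOf_le_two_mul_addOrderOf_two_nsmul (1 : ZMod n)
  have hn : (0 : ℝ) < n := by exact_mod_cast Nat.pos_of_ne_zero (NeZero.ne n)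
  rw [hp, ← Nat.centralBinom_eq_two_mul_choose]
  refine ⟨max_le ?_ (centralBinom_div_le_randomWalkMatrix_pow_apply_self _ τ 0), ?_,
    one_div_two_mul_sqrt_le_centralBinom_div_four_pow hτ⟩
  · simpa using inv_card_le_randomWalkMatrix_pow_apply_self (1 : ZMod n) τ 0
  calc _ ≤ _ := randomWalkMatrix_pow_apply_self_le (1 : ZMod n) τ 0
    _ ≤ 1 / √(π * τ) + 4 / n := by
      refine add_le_add (centralBinom_div_four_pow_le_one_div_sqrt (by omega)) ?_
      rw [div_le_div_iff₀ (by linarith) hn]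
      linarith
    _ = _ := add_comm _ _
end

section
/- For any integer n ≥ 1 and τ ≥ 1, (1/n)·∑_{y=0}^{n-1} cos(2πy/n)^{2τ} ≤ 4/n + 1/√(πτ). -/
/-!
Since `t ↦ cos t * exp (t ^ 2 / 2)` decreases on `[0, π/2]` (its derivative has the sign of
`t * cos t - sin t ≤ 0`), `cos x ^ (2τ) ≤ exp (-τ x ^ 2)` there. Bounding `cos (π r / N) ^ (2τ)`
by the Gaussians centred at `r = 0` and `r = N` and comparing the Gaussian sum with its integral
gives `∑_{r<N} cos (π r / N) ^ (2τ) ≤ 1 + N / √(π τ)`. The sum of the theorem reduces to this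
one: for `n = 2N` it is twice the sum for `N`, and for odd `n` the map `y ↦ 2y` permutes the
residues mod `n`. So it is at most `2 + n / √(π τ)`.
-/

open Real Finset

theorem Real.cos_le_exp_neg_sq_div_two {x : ℝ} (hx : |x| ≤ π / 2) :
    cos x ≤ exp (-(x ^ 2 / 2)) := by
  rw [← cos_abs, ← sq_abs]
  set g : ℝ → ℝ := fun t => cos t * exp (t ^ 2 / 2)
  have hg : AntitoneOn g (Set.Icc 0 (π / 2)) := by
    refine antitoneOn_of_deriv_nonpos (convex_Icc _ _) (by fun_prop) (by fun_prop) fun t ht => ?_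
    rw [interior_Icc] at ht
    have hcos : 0 < cos t := cos_pos_of_mem_Ioo ⟨by linarith [ht.1, pi_pos], ht.2⟩
    have htan : t * cos t ≤ sin t := by
      have := le_tan ht.1.le ht.2
      rwa [tan_eq_sin_div_cos, le_div_iff₀ hcos] at this
    have hd : deriv g t = exp (t ^ 2 / 2) * (t * cos t - sin t) := by
      have : HasDerivAt g _ t := (hasDerivAt_cos t).mul ((hasDerivAt_pow 2 t).div_const 2).exp
      rw [this.deriv]
      norm_num
      ring
    rw [hd]
    exact mul_nonpos_of_nonneg_of_nonpos (exp_pos _).le (by linarith)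
  have := hg (Set.left_mem_Icc.2 (by positivity)) ⟨abs_nonneg x, hx⟩ (abs_nonneg x)
  rw [exp_neg, ← one_div, le_div_iff₀ (exp_pos _)]
  simpa [g] using this

theorem Real.cos_pow_two_mul_le_exp (τ : ℕ) {x : ℝ} (hx : |x| ≤ π / 2) :
    cos x ^ (2 * τ) ≤ exp (-(τ * x ^ 2)) := by
  have hcos : 0 ≤ cos x := cos_nonneg_of_neg_pi_div_two_le_of_le (abs_le.1 hx).1 (abs_le.1 hx).2
  calc cos x ^ (2 * τ) = (cos x ^ 2) ^ τ := pow_mul _ _ _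
    _ ≤ (exp (-(x ^ 2 / 2)) ^ 2) ^ τ := by gcongr; exact cos_le_exp_neg_sq_div_two hx
    _ = exp (-(τ * x ^ 2)) := by rw [← exp_nat_mul, ← exp_nat_mul]; ring_nf

theorem Real.cos_pow_two_mul_le_exp_add_exp (τ : ℕ) {x : ℝ} (h0 : 0 ≤ x) (hπ : x ≤ π) :
    cos x ^ (2 * τ) ≤ exp (-(τ * x ^ 2)) + exp (-(τ * (π - x) ^ 2)) := by
  rcases le_total x (π / 2) with hx | hx
  · have := cos_pow_two_mul_le_exp τ (x := x) (by rw [abs_of_nonneg h0]; exact hx)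
    linarith [exp_pos (-(τ * (π - x) ^ 2))]
  · have := cos_pow_two_mul_le_exp τ (x := π - x) (by rw [abs_of_nonneg (by linarith)]; linarith)
    rw [cos_pi_sub, Even.neg_pow (even_two_mul τ)] at this
    linarith [exp_pos (-(τ * x ^ 2))]

theorem sum_range_exp_neg_mul_sq_le {b : ℝ} (hb : 0 < b) (M : ℕ) :
    ∑ k ∈ range M, exp (-b * k ^ 2) ≤ 1 + √(π / b) / 2 := by
  have anti : AntitoneOn (fun x : ℝ => exp (-b * x ^ 2)) (Set.Ici 0) := fun s hs t _ hst => by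
    simp only [exp_le_exp, neg_mul, neg_le_neg_iff]
    gcongr
  have integrable := (integrable_exp_neg_mul_sq hb).integrableOn (s := Set.Ioi 0)
  have nonneg : ∀ t ∈ Set.Ioi (0 : ℝ), 0 ≤ exp (-b * t ^ 2) := fun t _ => (exp_pos _).le
  calc ∑ k ∈ range M, exp (-b * k ^ 2)
      ≤ ∑' k : ℕ, exp (-b * k ^ 2) :=
        (anti.summable_of_integrableOn_Ioi_zero integrable nonneg).sum_le_tsum _
          fun _ _ => (exp_pos _).le
    _ ≤ exp (-b * (0 : ℝ) ^ 2) + ∫ x in Set.Ioi 0, exp (-b * x ^ 2) :=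
        anti.tsum_le_integral integrable nonneg
    _ = 1 + √(π / b) / 2 := by rw [integral_gaussian_Ioi]; simp

theorem Function.Periodic.sum_range_add_self {M : Type*} [AddCommMonoid M] {f : ℕ → M} {N : ℕ}
    (hf : Function.Periodic f N) : ∑ y ∈ range (N + N), f y = 2 • ∑ y ∈ range N, f y := by
  rw [sum_range_add, two_nsmul]
  exact congrArg _ (sum_congr rfl fun x _ => by rw [add_comm, hf x])

theorem Function.Periodic.sum_range_comp_mul {M : Type*} [AddCommMonoid M] {f : ℕ → M} {N c : ℕ}
    (hf : Function.Periodic f N) (hc : c.Coprime N) :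
    ∑ y ∈ range N, f (c * y) = ∑ r ∈ range N, f r := by
  have hinj : Set.InjOn (fun y => c * y % N) (range N) := fun y hy y' hy' h =>
    Nat.ModEq.eq_of_lt_of_lt (Nat.ModEq.cancel_left_of_coprime (Nat.coprime_comm.1 hc) h)
      (mem_range.1 hy) (mem_range.1 hy')
  have himage : (range N).image (fun y => c * y % N) = range N := by
    refine eq_of_subset_of_card_le (fun r hr => ?_) (card_image_of_injOn hinj).ge
    obtain ⟨y, hy, rfl⟩ := mem_image.1 hr
    exact mem_range.2 (Nat.mod_lt _ (by have := mem_range.1 hy; omega))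
  simp_rw [← hf.map_mod_nat (c * _)]
  rw [← sum_image hinj, himage]

theorem periodic_cos_pi_mul_div_pow_two_mul (N τ : ℕ) :
    Function.Periodic (fun j : ℕ => cos (π * j / N) ^ (2 * τ)) N := fun j => by
  rcases N.eq_zero_or_pos with rfl | hN
  · simp
  have : π * ↑(j + N) / N = π * j / N + π := by push_cast; field_simp
  simp only [this, cos_add_pi, Even.neg_pow (even_two_mul τ)]

theorem sum_range_cos_pi_mul_div_pow_two_mul_le (N : ℕ) {τ : ℕ} (hτ : 0 < τ) :
    ∑ r ∈ range N, cos (π * r / N) ^ (2 * τ) ≤ 1 + N / √(π * τ) := by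
  rcases N.eq_zero_or_pos with rfl | hN
  · simp
  have hN' : (0 : ℝ) < N := by exact_mod_cast hN
  set b : ℝ := τ * π ^ 2 / N ^ 2 with hb_def
  have hb : 0 < b := by positivity
  have hgauss : ∀ r : ℝ, exp (-(τ * (π * r / N) ^ 2)) = exp (-b * r ^ 2) := fun r => by
    rw [hb_def]; congr 1; field_simp
  have hscale : √(π / b) = N / √(π * τ) := by
    rw [show π / b = N ^ 2 / (π * τ) by rw [hb_def]; field_simp, sqrt_div' _ (by positivity),
      sqrt_sq hN'.le]
  have hsum : ∑ r ∈ range (N + 1), cos (π * r / N) ^ (2 * τ)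
      ≤ 2 * ∑ r ∈ range (N + 1), exp (-b * r ^ 2) := by
    calc ∑ r ∈ range (N + 1), cos (π * r / N) ^ (2 * τ)
        ≤ ∑ r ∈ range (N + 1), (exp (-b * r ^ 2) + exp (-b * ((N - r : ℕ) : ℝ) ^ 2)) := by
          refine sum_le_sum fun r hr => ?_
          have hrN : (r : ℝ) ≤ N := by exact_mod_cast Nat.lt_succ_iff.1 (mem_range.1 hr)
          have := cos_pow_two_mul_le_exp_add_exp τ (x := π * r / N) (by positivity)
            (by rw [div_le_iff₀ hN']; nlinarith [pi_pos])
          rwa [show π - π * r / N = π * ((N - r : ℕ) : ℝ) / N by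
            rw [Nat.cast_sub (Nat.lt_succ_iff.1 (mem_range.1 hr))]; field_simp, hgauss,
            hgauss] at this
      _ = 2 * ∑ r ∈ range (N + 1), exp (-b * r ^ 2) := by
          have hreflect := sum_range_reflect (fun r : ℕ => exp (-b * r ^ 2)) (N + 1)
          rw [Nat.add_sub_cancel] at hreflect
          rw [sum_add_distrib, hreflect, two_mul]
  rw [sum_range_succ, mul_div_cancel_right₀ π hN'.ne', cos_pi,
    Even.neg_one_pow (even_two_mul τ)] at hsum
  linarith [sum_range_exp_neg_mul_sq_le hb (N + 1)]

theorem sum_range_cos_two_pi_mul_div_pow_two_mul_le (n : ℕ) {τ : ℕ} (hτ : 0 < τ) :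
    ∑ y ∈ range n, cos (2 * π * y / n) ^ (2 * τ) ≤ 2 + n / √(π * τ) := by
  rcases Nat.even_or_odd' n with ⟨N, rfl | rfl⟩
  · have hangle (y : ℕ) : 2 * π * y / ↑(2 * N) = π * y / N := by
      push_cast; rw [mul_assoc, mul_div_mul_left _ _ two_ne_zero]
    rw [sum_congr rfl fun y _ => by rw [hangle], two_mul,
      (periodic_cos_pi_mul_div_pow_two_mul N τ).sum_range_add_self, nsmul_eq_mul, ← two_mul]
    have := sum_range_cos_pi_mul_div_pow_two_mul_le N hτ
    push_cast
    rw [mul_div_assoc]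
    linarith
  · have hangle (y : ℕ) : 2 * π * y / ↑(2 * N + 1) = π * ↑(2 * y) / ↑(2 * N + 1) := by
      push_cast; ring
    rw [sum_congr rfl fun y _ => by rw [hangle],
      (periodic_cos_pi_mul_div_pow_two_mul _ τ).sum_range_comp_mul
        (Nat.coprime_two_left.2 (odd_two_mul_add_one N))]
    linarith [sum_range_cos_pi_mul_div_pow_two_mul_le (2 * N + 1) hτ]

theorem cosine_power_sum_bound_general (n τ : ℕ) (hτ : 1 ≤ τ) :
    (1 / (n : ℝ)) * ∑ y ∈ Finset.range n, Real.cos (2 * π * y / n) ^ (2 * τ) ≤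
      4 / (n : ℝ) + 1 / Real.sqrt (π * τ) := by
  have hbound := sum_range_cos_two_pi_mul_div_pow_two_mul_le n hτ
  have hcancel : (1 / n : ℝ) * n ≤ 1 := by
    rcases n.eq_zero_or_pos with rfl | hn
    · simp
    · rw [one_div_mul_cancel (by positivity)]
  calc (1 / (n : ℝ)) * ∑ y ∈ range n, cos (2 * π * y / n) ^ (2 * τ)
      ≤ 1 / n * (2 + n / √(π * τ)) := by gcongr
    _ = 2 / n + (1 / n * n) / √(π * τ) := by ring
    _ ≤ 4 / n + 1 / √(π * τ) := by gcongr; norm_num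

theorem cosine_power_sum_bound (n τ : ℕ) (hn : 1 ≤ n) (hτ : 1 ≤ τ) :
    (1 / (n : ℝ)) * ∑ y ∈ Finset.range n, Real.cos (2 * π * y / n) ^ (2 * τ) ≤
      4 / (n : ℝ) + 1 / Real.sqrt (π * τ) :=
  cosine_power_sum_bound_general n τ hτ
end

section
/- Let N_e(d, 2τ) be the number of sequences in {1,…,d}^{2τ} in which every symbol appears an even number of times. Then N_e(d, 2τ) ≥ d^{2τ}/2^d. Equivalently, N_e(d,2τ) = (1/2^d)·∑_{k=0}^{d} C(d,k)·(d-2k)^{2τ} ≥ d^{2τ}/2^d. -/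
/-!
Since `(-1)^c + 1` is `2` for even `c` and `0` for odd `c`, the number of sequences
`f : ι → α` with all fibres of even size is `2^{-|α|} ∑_f ∏_s ((-1)^{|f⁻¹ s|} + 1)`.
Expanding the product over subsets `S ⊆ α` turns each summand into `∏_i χ_S(f i)` with the
sign character `χ_S = -1` on `S` and `1` off it, and summing over `f` gives
`(∑_a χ_S a)^{|ι|} = (|α| - 2|S|)^{|ι|}`. For `|ι|` even every term is nonnegative and the term
`S = ∅` alone is `|α|^{|ι|}`.
-/

open Finset

section EvenFibres

variable {ι α R : Type*} [Fintype ι] [Fintype α] [CommRing R]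

lemma neg_one_pow_add_one_eq_ite (n : ℕ) : (-1 : R) ^ n + 1 = if Even n then 2 else 0 := by
  rcases n.even_or_odd with h | h
  · simp [h.neg_one_pow, h, one_add_one_eq_two]
  · simp [h.neg_one_pow, Nat.not_even_iff_odd.mpr h]

lemma sum_finset_sub_two_mul_card_pow (n : ℕ) :
    ∑ S : Finset α, ((Fintype.card α : R) - 2 * #S) ^ n =
      ∑ k ∈ range (Fintype.card α + 1),
        ((Fintype.card α).choose k : R) * ((Fintype.card α : R) - 2 * k) ^ n := by
  rw [← powerset_univ, sum_powerset_apply_card (fun k => ((Fintype.card α : R) - 2 * k) ^ n),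
    card_univ]
  simp only [nsmul_eq_mul]

variable [DecidableEq α]

lemma prod_neg_one_pow_card_fiber_add_one (f : ι → α) :
    ∏ s, ((-1 : R) ^ #{i | f i = s} + 1) =
      if ∀ s, Even #{i | f i = s} then 2 ^ Fintype.card α else 0 := by
  simp_rw [neg_one_pow_add_one_eq_ite, Fintype.prod_ite_zero, prod_const, card_univ]

lemma prod_neg_one_pow_card_fiber_add_one_eq_sum (f : ι → α) :
    ∏ s, ((-1 : R) ^ #{i | f i = s} + 1) = ∑ S : Finset α, ∏ i, if f i ∈ S then -1 else 1 := by
  rw [Fintype.prod_add]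
  refine sum_congr rfl fun S _ => ?_
  rw [prod_const_one, mul_one, ← prod_fiberwise' univ f (fun s => if s ∈ S then (-1 : R) else 1)]
  simp only [prod_const, ite_pow, one_pow, Fintype.prod_ite_mem]

lemma sum_ite_mem_neg_one_one (S : Finset α) :
    ∑ a, (if a ∈ S then (-1 : R) else 1) = Fintype.card α - 2 * #S := by
  have h a : (if a ∈ S then (-1 : R) else 1) = 1 - 2 * if a ∈ S then 1 else 0 := by
    split_ifs <;> ring
  simp_rw [h, sum_sub_distrib, ← mul_sum, Fintype.sum_ite_mem, sum_const, card_univ]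
  simp

theorem card_even_fibers_mul_two_pow [DecidableEq ι] :
    (#{f : ι → α | ∀ s, Even #{i | f i = s}} : R) * 2 ^ Fintype.card α =
      ∑ k ∈ range (Fintype.card α + 1),
        ((Fintype.card α).choose k : R) * ((Fintype.card α : R) - 2 * k) ^ Fintype.card ι := by
  calc _ = ∑ f : ι → α, ∏ s, ((-1 : R) ^ #{i | f i = s} + 1) := by
        simp_rw [prod_neg_one_pow_card_fiber_add_one, sum_ite, sum_const_zero, sum_const,
          nsmul_eq_mul, add_zero]
    _ = ∑ S : Finset α, ∑ f : ι → α, ∏ i, (if f i ∈ S then (-1 : R) else 1) := by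
        simp_rw [prod_neg_one_pow_card_fiber_add_one_eq_sum]
        exact sum_comm
    _ = ∑ S : Finset α, ((Fintype.card α : R) - 2 * #S) ^ Fintype.card ι := by
        refine sum_congr rfl fun S _ => ?_
        rw [← Fintype.prod_sum (fun (_ : ι) (a : α) => if a ∈ S then (-1 : R) else 1),
          prod_const, sum_ite_mem_neg_one_one, card_univ]
    _ = _ := sum_finset_sub_two_mul_card_pow _

end EvenFibres

lemma pow_le_sum_choose_mul_sub_two_mul_pow {R : Type*} [CommRing R] [LinearOrder R]
    [IsStrictOrderedRing R] (d : ℕ) {n : ℕ} (hn : Even n) :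
    (d : R) ^ n ≤ ∑ k ∈ range (d + 1), (d.choose k : R) * ((d : R) - 2 * k) ^ n := by
  have h := single_le_sum (f := fun k => (d.choose k : R) * ((d : R) - 2 * k) ^ n)
    (fun k _ => mul_nonneg (d.choose k).cast_nonneg' (hn.pow_nonneg _)) (mem_range.mpr d.succ_pos)
  simpa using h

theorem even_occurrence_sequences_count_general (d τ : ℕ) :
    let Ne : ℕ :=
      (Finset.univ.filter (fun f : Fin (2 * τ) → Fin d =>
        ∀ s : Fin d, Even ((Finset.univ.filter (fun i => f i = s)).card))).card
    (d : ℝ) ^ (2 * τ) / 2 ^ d ≤ (Ne : ℝ) ∧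
      (Ne : ℝ) = (1 / 2 ^ d) *
        ∑ k ∈ Finset.range (d + 1), (d.choose k : ℝ) * ((d : ℝ) - 2 * k) ^ (2 * τ) := by
  intro Ne
  have key : (Ne : ℝ) * 2 ^ d =
      ∑ k ∈ range (d + 1), (d.choose k : ℝ) * ((d : ℝ) - 2 * k) ^ (2 * τ) := by
    have h := card_even_fibers_mul_two_pow (ι := Fin (2 * τ)) (α := Fin d) (R := ℝ)
    rw [Fintype.card_fin, Fintype.card_fin] at h
    -- `Ne` decides its filter by `Nat.decidableForallFin` rather than `Fintype.decidableForallFintype`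
    convert h
    rfl
  have two_pow_pos : (0 : ℝ) < 2 ^ d := by positivity
  constructor
  · rw [div_le_iff₀ two_pow_pos, key]
    exact pow_le_sum_choose_mul_sub_two_mul_pow d (even_two_mul τ)
  · rw [one_div, inv_mul_eq_div, eq_div_iff two_pow_pos.ne']
    exact key

theorem even_occurrence_sequences_count (d τ : ℕ) (hd : 1 ≤ d) :
    let Ne : ℕ :=
      (Finset.univ.filter (fun f : Fin (2 * τ) → Fin d =>
        ∀ s : Fin d, Even ((Finset.univ.filter (fun i => f i = s)).card))).card
    (d : ℝ) ^ (2 * τ) / 2 ^ d ≤ (Ne : ℝ) ∧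
      (Ne : ℝ) = (1 / 2 ^ d) *
        ∑ k ∈ Finset.range (d + 1), (d.choose k : ℝ) * ((d : ℝ) - 2 * k) ^ (2 * τ) :=
  even_occurrence_sequences_count_general d τ
end
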